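/- arXiv:1302.3813 — 2 statements merged into one kernel-verified Lean document; each statement's English description precedes it below -/
import Mathlib

section
/- Let k be a field, P, Q ∈ k[X], and let S = {(x,y,u,v) ∈ k⁴ : yu = xP(x), vx = uQ(u), yv = P(x)Q(u)}. For every α ∈ k with α ≠ 0 and P(α) = 0, the map k → S given by u ↦ (α, 0, u, u·Q(u)/α) is injective with image exactly {(x,y,u,v) ∈ S : y = 0 and x = α}. -/
open Polynomial

/-- The affine surface in `k⁴` defined by `yu = xP(x)`, `vx = uQ(u)`, `yv = P(x)Q(u)`. -/
def surf (k : Type*) [Field k] (P Q : k[X]) : Set (k × k × k × k) :=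
  {p | p.2.1 * p.2.2.1 = p.1 * P.eval p.1 ∧
       p.2.2.2 * p.1 = p.2.2.1 * Q.eval p.2.2.1 ∧
       p.2.1 * p.2.2.2 = P.eval p.1 * Q.eval p.2.2.1}

theorem mk_root_zero_mem_surf_iff {k : Type*} [Field k] {P : k[X]} (Q : k[X]) {α : k}
    (hroot : P.eval α = 0) (u v : k) :
    (α, 0, u, v) ∈ surf k P Q ↔ v * α = u * Q.eval u := by
  simp [surf, hroot]

theorem stmt_4 (k : Type*) [Field k] (P Q : k[X]) (α : k)
    (hα : α ≠ 0) (hroot : P.eval α = 0) :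
    Function.Injective (fun u : k => (α, (0 : k), u, u * Q.eval u / α)) ∧
    Set.range (fun u : k => (α, (0 : k), u, u * Q.eval u / α)) =
      {p ∈ surf k P Q | p.2.1 = 0 ∧ p.1 = α} := by
  refine ⟨fun a b h => congrArg (·.2.2.1) h, Set.ext fun ⟨x, y, u, v⟩ => ⟨?_, ?_⟩⟩
  · rintro ⟨w, hw⟩
    cases hw
    refine ⟨?_, rfl, rfl⟩
    rw [mk_root_zero_mem_surf_iff Q hroot, div_mul_cancel₀ _ hα]
  · rintro ⟨hS, rfl, rfl⟩
    rw [mk_root_zero_mem_surf_iff Q hroot, ← eq_div_iff hα] at hS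
    exact ⟨u, by rw [hS]⟩
end

section
/- Let k be a field, P, Q ∈ k[X], and let S = {(x,y,u,v) ∈ k⁴ : yu = xP(x), vx = uQ(u), yv = P(x)Q(u)}. For every a, c ∈ k* and λ, μ ∈ k* satisfying P(aX) = λ·P(X) and Q((aλ/c)·X) = μ·Q(X), the diagonal map (x,y,u,v) ↦ (a·x, c·y, (aλ/c)·u, (λμ/c)·v) maps S bijectively onto itself. -/
/-!
The map is a diagonal scaling of `k⁴`. The relations `P(ax) = λP(x)` and `Q(bu) = μQ(u)`, with
`b = aλ/c`, `d = λμ/c`, scale each of the three defining equations by a common factor, so the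
scaling maps `S` into itself. Its inverse is the scaling by `a⁻¹, c⁻¹, b⁻¹, d⁻¹`, which satisfies the
same relations with `λ⁻¹, μ⁻¹`, hence also maps `S` into itself.
-/

open Polynomial

section

variable {k : Type*} [Field k]

def diagScale (a c b d : k) (p : k × k × k × k) : k × k × k × k :=
  (a * p.1, c * p.2.1, b * p.2.2.1, d * p.2.2.2)

theorem diagScale_leftInverse {a c b d : k} (ha : a ≠ 0) (hc : c ≠ 0) (hb : b ≠ 0) (hd : d ≠ 0) :
    Function.LeftInverse (diagScale a⁻¹ c⁻¹ b⁻¹ d⁻¹) (diagScale a c b d) := fun _ => by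
  simp only [diagScale, inv_mul_cancel_left₀ ha, inv_mul_cancel_left₀ hc,
    inv_mul_cancel_left₀ hb, inv_mul_cancel_left₀ hd]

theorem Polynomial.eval_mul_of_comp_C_mul_X {P : k[X]} {a l : k} (h : P.comp (C a * X) = C l * P)
    (x : k) : P.eval (a * x) = l * P.eval x := by
  simpa using congrArg (eval x) h

theorem apply_inv_mul_of_apply_mul {f : k → k} {a l : k} (hf : ∀ x, f (a * x) = l * f x)
    (ha : a ≠ 0) (hl : l ≠ 0) (x : k) : f (a⁻¹ * x) = l⁻¹ * f x := by
  rw [← mul_inv_cancel_left₀ ha x, hf, inv_mul_cancel_left₀ hl, mul_inv_cancel_left₀ ha]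

theorem mapsTo_diagScale_surf {P Q : k[X]} {a c b d l m : k}
    (hP : ∀ x, P.eval (a * x) = l * P.eval x) (hQ : ∀ u, Q.eval (b * u) = m * Q.eval u)
    (hcb : c * b = a * l) (hda : d * a = b * m) (hcd : c * d = l * m) :
    Set.MapsTo (diagScale a c b d) (surf k P Q) (surf k P Q) := by
  rintro ⟨x, y, u, v⟩ ⟨h₁, h₂, h₃⟩
  dsimp only at h₁ h₂ h₃
  refine ⟨?_, ?_, ?_⟩ <;> simp only [diagScale, hP, hQ]
  · linear_combination (y * u) * hcb + a * l * h₁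
  · linear_combination (v * x) * hda + b * m * h₂
  · linear_combination (y * v) * hcd + l * m * h₃

theorem bijOn_diagScale_surf {P Q : k[X]} {a c b d l m : k}
    (ha : a ≠ 0) (hc : c ≠ 0) (hb : b ≠ 0) (hd : d ≠ 0) (hl : l ≠ 0) (hm : m ≠ 0)
    (hP : ∀ x, P.eval (a * x) = l * P.eval x) (hQ : ∀ u, Q.eval (b * u) = m * Q.eval u)
    (hcb : c * b = a * l) (hda : d * a = b * m) (hcd : c * d = l * m) :
    Set.BijOn (diagScale a c b d) (surf k P Q) (surf k P Q) := by
  have hinv := diagScale_leftInverse ha hc hb hd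
  have hinv' : Function.LeftInverse (diagScale a c b d) (diagScale a⁻¹ c⁻¹ b⁻¹ d⁻¹) := by
    simpa only [inv_inv] using
      diagScale_leftInverse (inv_ne_zero ha) (inv_ne_zero hc) (inv_ne_zero hb) (inv_ne_zero hd)
  refine Set.InvOn.bijOn ⟨hinv.leftInvOn _, hinv'.leftInvOn _⟩
    (mapsTo_diagScale_surf hP hQ hcb hda hcd)
    (mapsTo_diagScale_surf (apply_inv_mul_of_apply_mul (f := P.eval) hP ha hl)
      (apply_inv_mul_of_apply_mul (f := Q.eval) hQ hb hm) ?_ ?_ ?_)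
  all_goals simp only [← mul_inv, hcb, hda, hcd]

end

theorem stmt_17 (k : Type*) [Field k] (P Q : k[X]) (a c l m : k)
    (ha : a ≠ 0) (hc : c ≠ 0) (hl : l ≠ 0) (hm : m ≠ 0)
    (hP : P.comp (C a * X) = C l * P)
    (hQ : Q.comp (C (a * l / c) * X) = C m * Q) :
    Set.BijOn
      (fun p : k × k × k × k =>
        (a * p.1, c * p.2.1, (a * l / c) * p.2.2.1, (l * m / c) * p.2.2.2))
      (surf k P Q) (surf k P Q) := by
  refine bijOn_diagScale_surf ha hc (by positivity) (by positivity) hl hm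
    (eval_mul_of_comp_C_mul_X hP) (eval_mul_of_comp_C_mul_X hQ) ?_ ?_ ?_ <;> field_simp
end
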